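/- Let X be a Banach space, c ≥ 1, and suppose X is c-Grothendieck. Then for every z** ∈ (1/c)·B_{X**} and every sequence (xₙ*) in B_{X*}, one has limsup_{n→∞} z**(xₙ*) ≤ sup_{x ∈ B_X} limsup_{n→∞} xₙ*(x). -/

import Mathlib

/-!
Interleave `ξ` with its negatives, `alternate ξ = (ξ 0, -ξ 0, ξ 1, -ξ 1, …)`. At a point `x ∈ B_X`
the terms of this sequence are eventually bounded in absolute value by `S + ε`, where `S` is the
supremum of `limsup_n ξ n x` over `B_X` (apply it at `x` and at `-x`), so its weak* oscillation
is at most `2S`. On the other hand `c • z ∈ B_{X**}` sees the jumps `2c z(ξ k)` between the terms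
`2k` and `2k + 1`, so its weak oscillation is at least `2c limsup_n z(ξ n)`. Being `c`-Grothendieck
then gives `2c limsup_n z(ξ n) ≤ 2cS`.
-/

open Filter Metric Topology

/-- Measure of weak non-cauchyness of a sequence in the dual:
`δ_w(f) = sup_{F ∈ B_{X**}} inf_n sup_{k,l ≥ n} |F(f k) - F(f l)|`. -/
noncomputable def deltaW {X : Type*} [NormedAddCommGroup X] [NormedSpace ℝ X]
    (f : ℕ → X →L[ℝ] ℝ) : ℝ :=
  ⨆ F : (closedBall (0 : (X →L[ℝ] ℝ) →L[ℝ] ℝ) 1),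
    ⨅ n : ℕ, ⨆ p : {p : ℕ × ℕ // n ≤ p.1 ∧ n ≤ p.2},
      |F.1 (f p.1.1) - F.1 (f p.1.2)|

/-- Measure of weak* non-cauchyness of a sequence in the dual:
`δ_{w*}(f) = sup_{x ∈ B_X} inf_n sup_{k,l ≥ n} |f k x - f l x|`. -/
noncomputable def deltaWStar {X : Type*} [NormedAddCommGroup X] [NormedSpace ℝ X]
    (f : ℕ → X →L[ℝ] ℝ) : ℝ :=
  ⨆ x : (closedBall (0 : X) 1),
    ⨅ n : ℕ, ⨆ p : {p : ℕ × ℕ // n ≤ p.1 ∧ n ≤ p.2},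
      |f p.1.1 x.1 - f p.1.2 x.1|

/-- `X` is `c`-Grothendieck if `δ_w(f) ≤ c · δ_{w*}(f)` for every bounded sequence `f` in `X*`. -/
def IsCGrothendieck (c : ℝ) (X : Type*) [NormedAddCommGroup X] [NormedSpace ℝ X] : Prop :=
  ∀ f : ℕ → X →L[ℝ] ℝ, Bornology.IsBounded (Set.range f) → deltaW f ≤ c * deltaWStar f

section Alternate

variable {M : Type*}

def alternate [Neg M] (v : ℕ → M) (m : ℕ) : M :=
  if Even m then v (m / 2) else -v (m / 2)

@[simp]
lemma alternate_two_mul [Neg M] (v : ℕ → M) (k : ℕ) : alternate v (2 * k) = v k := by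
  simp [alternate]

@[simp]
lemma alternate_two_mul_add_one [Neg M] (v : ℕ → M) (k : ℕ) :
    alternate v (2 * k + 1) = -v k := by
  have : (2 * k + 1) / 2 = k := by omega
  simp [alternate, this]

lemma map_alternate {N F : Type*} [AddGroup M] [SubtractionMonoid N] [FunLike F M N]
    [AddMonoidHomClass F M N] (φ : F) (v : ℕ → M) (m : ℕ) :
    φ (alternate v m) = alternate (fun k => φ (v k)) m := by
  unfold alternate
  split_ifs <;> simp

lemma norm_alternate [SeminormedAddGroup M] (v : ℕ → M) (m : ℕ) :
    ‖alternate v m‖ = ‖v (m / 2)‖ := by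
  unfold alternate
  split_ifs <;> simp

lemma abs_alternate (v : ℕ → ℝ) (m : ℕ) : |alternate v m| = |v (m / 2)| :=
  norm_alternate v m

end Alternate

section BoundedReal

variable {α : Type*} {l : Filter α} {u : α → ℝ} {C : ℝ}

lemma isBoundedUnder_le_of_abs_le (hu : ∀ a, |u a| ≤ C) : l.IsBoundedUnder (· ≤ ·) u :=
  isBoundedUnder_of ⟨C, fun a => (le_abs_self _).trans (hu a)⟩

lemma isCoboundedUnder_le_of_abs_le [l.NeBot] (hu : ∀ a, |u a| ≤ C) :
    l.IsCoboundedUnder (· ≤ ·) u :=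
  isCoboundedUnder_le_of_le l (x := -C) fun a => neg_le_of_abs_le (hu a)

lemma limsup_le_of_abs_le [l.NeBot] (hu : ∀ a, |u a| ≤ C) : limsup u l ≤ C :=
  limsup_le_of_le (isCoboundedUnder_le_of_abs_le hu)
    (Eventually.of_forall fun a => (le_abs_self _).trans (hu a))

lemma limsup_const_mul_of_abs_le [l.NeBot] (hu : ∀ a, |u a| ≤ C) {c : ℝ} (hc : 0 < c) :
    limsup (fun a => c * u a) l = c * limsup u l := by
  have hcu : ∀ a, |c * u a| ≤ c * C := fun a => by
    rw [abs_mul, abs_of_pos hc]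
    exact mul_le_mul_of_nonneg_left (hu a) hc.le
  exact ((OrderIso.mulLeft₀ c hc).limsup_apply (isBoundedUnder_le_of_abs_le hu)
    (isCoboundedUnder_le_of_abs_le hu) (isBoundedUnder_le_of_abs_le hcu)
    (isCoboundedUnder_le_of_abs_le hcu)).symm

end BoundedReal

section TailOscillation

/-- `deltaW f` and `deltaWStar f` are, definitionally, the suprema of `tailOscillation (F ∘ f)`
over `F ∈ B_{X**}` and of `tailOscillation (f · x)` over `x ∈ B_X`. -/
noncomputable def tailOscillation (u : ℕ → ℝ) : ℝ :=
  ⨅ n : ℕ, ⨆ p : {p : ℕ × ℕ // n ≤ p.1 ∧ n ≤ p.2}, |u p.1.1 - u p.1.2|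

variable {u v : ℕ → ℝ} {C : ℝ}

lemma tailOscillation_le_of_eventually_abs_le (hu : ∀ᶠ k in atTop, |u k| ≤ C) :
    tailOscillation u ≤ 2 * C := by
  obtain ⟨N, hN⟩ := eventually_atTop.mp hu
  have : Nonempty {p : ℕ × ℕ // N ≤ p.1 ∧ N ≤ p.2} := ⟨⟨(N, N), le_rfl, le_rfl⟩⟩
  refine (ciInf_le ⟨0, ?_⟩ N).trans (ciSup_le ?_)
  · rintro _ ⟨n, rfl⟩
    exact Real.iSup_nonneg fun _ => abs_nonneg _
  · rintro ⟨⟨k, l⟩, hk, hl⟩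
    linarith [abs_sub (u k) (u l), hN k hk, hN l hl]

lemma two_mul_limsup_le_tailOscillation_alternate (hv : ∀ k, |v k| ≤ C) :
    2 * limsup v atTop ≤ tailOscillation (alternate v) := by
  refine le_ciInf fun n => ?_
  set T :=
    ⨆ p : {p : ℕ × ℕ // n ≤ p.1 ∧ n ≤ p.2}, |alternate v p.1.1 - alternate v p.1.2|
  have hT : BddAbove (Set.range fun p : {p : ℕ × ℕ // n ≤ p.1 ∧ n ≤ p.2} =>
      |alternate v p.1.1 - alternate v p.1.2|) := by
    refine ⟨2 * C, ?_⟩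
    rintro _ ⟨⟨⟨k, l⟩, -⟩, rfl⟩
    linarith [abs_sub (alternate v k) (alternate v l), (abs_alternate v k).trans_le (hv _),
      (abs_alternate v l).trans_le (hv _)]
  have hvT : ∀ k ≥ n, 2 * v k ≤ T := fun k hk =>
    calc 2 * v k ≤ |alternate v (2 * k) - alternate v (2 * k + 1)| := by
          rw [alternate_two_mul, alternate_two_mul_add_one, sub_neg_eq_add, ← two_mul]
          exact le_abs_self _
      _ ≤ T := le_ciSup hT ⟨(2 * k, 2 * k + 1), by omega, by omega⟩
  rw [← le_div_iff₀' two_pos]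
  exact limsup_le_of_le (isCoboundedUnder_le_of_abs_le hv)
    (eventually_atTop.mpr ⟨n, fun k hk => (le_div_iff₀' two_pos).mpr (hvT k hk)⟩)

lemma tailOscillation_alternate_le (hv : ∀ k, |v k| ≤ C) :
    tailOscillation (alternate v) ≤ 2 * max (limsup v atTop) (limsup (-v) atTop) := by
  set L := max (limsup v atTop) (limsup (-v) atTop)
  refine le_of_forall_pos_le_add fun ε hε => ?_
  have hlt : ∀ w : ℕ → ℝ, (∀ k, |w k| ≤ C) → limsup w atTop ≤ L →
      ∀ᶠ k in atTop, w k < L + ε / 2 := fun w hw hwL =>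
    eventually_lt_of_limsup_lt (by linarith) (isBoundedUnder_le_of_abs_le hw)
  have hvL : ∀ᶠ k in atTop, |v k| ≤ L + ε / 2 :=
    ((hlt v hv (le_max_left _ _)).and (hlt (-v) (by simpa using hv) (le_max_right _ _))).mono
      fun k hk => abs_le.mpr ⟨by linarith [hk.2, Pi.neg_apply v k], hk.1.le⟩
  have := tailOscillation_le_of_eventually_abs_le
    (((Nat.tendsto_div_const_atTop two_ne_zero).eventually hvL).mono
      fun m hm => (abs_alternate v m).trans_le hm)
  linarith

end TailOscillation

section DualSequences

variable {X : Type*} [NormedAddCommGroup X] [NormedSpace ℝ X]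
  {f : ℕ → X →L[ℝ] ℝ} {C : ℝ}

lemma tailOscillation_le_deltaW (hf : ∀ k, ‖f k‖ ≤ C) {F : (X →L[ℝ] ℝ) →L[ℝ] ℝ}
    (hF : ‖F‖ ≤ 1) : tailOscillation (fun k => F (f k)) ≤ deltaW f := by
  have hmem {G : (X →L[ℝ] ℝ) →L[ℝ] ℝ} : G ∈ closedBall 0 1 ↔ ‖G‖ ≤ 1 :=
    mem_closedBall_zero_iff (E := (X →L[ℝ] ℝ) →L[ℝ] ℝ)
  refine le_ciSup (f := fun G : closedBall (0 : (X →L[ℝ] ℝ) →L[ℝ] ℝ) 1 =>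
    tailOscillation fun k => G.1 (f k)) ⟨2 * C, ?_⟩ ⟨F, hmem.mpr hF⟩
  rintro _ ⟨G, rfl⟩
  refine tailOscillation_le_of_eventually_abs_le (Eventually.of_forall fun k => ?_)
  exact (G.1.le_of_opNorm_le_of_le (hmem.mp G.2) (hf k)).trans_eq (one_mul C)

lemma deltaWStar_alternate_le (hf : ∀ k, ‖f k‖ ≤ C) :
    deltaWStar (alternate f) ≤
      2 * ⨆ x : closedBall (0 : X) 1, limsup (fun k => f k x.1) atTop := by
  have hbound : ∀ x ∈ closedBall (0 : X) 1, ∀ k, |f k x| ≤ C := fun x hx k =>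
    ((f k).le_of_opNorm_le_of_le (hf k) (mem_closedBall_zero_iff.mp hx)).trans_eq (mul_one C)
  have hS : ∀ x ∈ closedBall (0 : X) 1, limsup (fun k => f k x) atTop ≤
      ⨆ x : closedBall (0 : X) 1, limsup (fun k => f k x.1) atTop := fun x hx =>
    le_ciSup (f := fun x : closedBall (0 : X) 1 => limsup (fun k => f k x.1) atTop)
      ⟨C, by rintro _ ⟨y, rfl⟩; exact limsup_le_of_abs_le (hbound y.1 y.2)⟩ ⟨x, hx⟩
  have : Nonempty (closedBall (0 : X) 1) := ⟨⟨0, mem_closedBall_self zero_le_one⟩⟩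
  refine ciSup_le fun x => ?_
  have hneg : -(fun k => f k x.1) = fun k => f k (-x.1) := by
    funext k
    simp
  have hx' : -x.1 ∈ closedBall (0 : X) 1 := by
    simpa only [mem_closedBall_zero_iff, norm_neg] using x.2
  calc tailOscillation (fun m => alternate f m x.1)
      = tailOscillation (alternate fun k => f k x.1) := by
        congr 1
        funext m
        exact map_alternate (ContinuousLinearMap.apply ℝ ℝ x.1) f m
    _ ≤ _ := tailOscillation_alternate_le (hbound x.1 x.2)
    _ ≤ _ := by
        rw [hneg]
        gcongr
        exact max_le (hS x.1 x.2) (hS _ hx')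

end DualSequences

theorem limsup_le_of_isCGrothendieck_general {X : Type*} [NormedAddCommGroup X] [NormedSpace ℝ X]
    (c : ℝ) (hc : 1 ≤ c) (hX : IsCGrothendieck c X)
    (z : (X →L[ℝ] ℝ) →L[ℝ] ℝ) (hz : ‖z‖ ≤ 1 / c)
    (ξ : ℕ → X →L[ℝ] ℝ) (hξ : ∀ n, ‖ξ n‖ ≤ 1) :
    Filter.limsup (fun n => z (ξ n)) Filter.atTop ≤
      ⨆ x : (closedBall (0 : X) 1), Filter.limsup (fun n => ξ n x.1) Filter.atTop := by
  have hc0 : 0 < c := by linarith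
  have hcz : ‖c • z‖ ≤ 1 :=
    calc ‖c • z‖ ≤ ‖c‖ * ‖z‖ := z.opNorm_smul_le c
      _ ≤ c * (1 / c) := by rw [Real.norm_of_nonneg hc0.le]; gcongr
      _ = 1 := by field_simp
  have hzξ : ∀ n, |z (ξ n)| ≤ 1 / c := fun n =>
    (z.le_of_opNorm_le_of_le hz (hξ n)).trans_eq (mul_one _)
  have hczξ : ∀ n, |(c • z) (ξ n)| ≤ 1 := fun n =>
    ((c • z).le_of_opNorm_le_of_le hcz (hξ n)).trans_eq (mul_one _)
  have hξalt : ∀ m, ‖alternate ξ m‖ ≤ 1 := fun m => (norm_alternate ξ m).trans_le (hξ _)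
  have hweak : 2 * (c * limsup (fun n => z (ξ n)) atTop) ≤ deltaW (alternate ξ) :=
    calc 2 * (c * limsup (fun n => z (ξ n)) atTop)
        = 2 * limsup (fun n => (c • z) (ξ n)) atTop := by
          simp only [smul_apply, smul_eq_mul, limsup_const_mul_of_abs_le hzξ hc0]
      _ ≤ tailOscillation (alternate fun n => (c • z) (ξ n)) :=
          two_mul_limsup_le_tailOscillation_alternate hczξ
      _ = tailOscillation (fun m => (c • z) (alternate ξ m)) := by
          simp only [map_alternate]
      _ ≤ deltaW (alternate ξ) := tailOscillation_le_deltaW hξalt hcz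
  have hbdd : Bornology.IsBounded (Set.range (alternate ξ)) :=
    isBounded_iff_forall_norm_le.mpr ⟨1, by rintro _ ⟨m, rfl⟩; exact hξalt m⟩
  have hchain := (hweak.trans (hX _ hbdd)).trans
    (mul_le_mul_of_nonneg_left (deltaWStar_alternate_le hξ) hc0.le)
  nlinarith [hchain]

/-- If `X` is `c`-Grothendieck, then for every `z ∈ (1/c) · B_{X**}` and every sequence
`(ξ n)` in `B_{X*}` one has `limsup_n z (ξ n) ≤ sup_{x ∈ B_X} limsup_n (ξ n x)`. -/
theorem limsup_le_of_isCGrothendieck {X : Type*} [NormedAddCommGroup X] [NormedSpace ℝ X]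
    [CompleteSpace X] (c : ℝ) (hc : 1 ≤ c) (hX : IsCGrothendieck c X)
    (z : (X →L[ℝ] ℝ) →L[ℝ] ℝ) (hz : ‖z‖ ≤ 1 / c)
    (ξ : ℕ → X →L[ℝ] ℝ) (hξ : ∀ n, ‖ξ n‖ ≤ 1) :
    Filter.limsup (fun n => z (ξ n)) Filter.atTop ≤
      ⨆ x : (closedBall (0 : X) 1), Filter.limsup (fun n => ξ n x.1) Filter.atTop :=
  limsup_le_of_isCGrothendieck_general c hc hX z hz ξ hξ
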